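/- arXiv:2406.01902 — 2 statements merged into one kernel-verified Lean document; each statement's English description precedes it below -/
import Mathlib

section
/- Poincaré-type inequality: for any continuously differentiable function g : [0,1] → ℝ with ∫₀¹ z(1-z) |g'(z)|² dz < ∞, one has ∫₀¹ |g(z) - ∫₀¹ g(w) dw|² dz ≤ (1/2) ∫₀¹ z(1-z) |g'(z)|² dz. -/
open MeasureTheory Set intervalIntegral

private lemma wp_lemA (g : ℝ → ℝ) (hg : ContDiff ℝ 1 g) {s : ℝ} (hs0 : 0 ≤ s) (hs1 : s ≤ 1) :
    (∫ t in (0:ℝ)..1, (min s t - s * t) * deriv g t)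
      = s * (∫ w in (0:ℝ)..1, g w) - ∫ t in (0:ℝ)..s, g t := by
  have hD : Continuous (deriv g) := hg.continuous_deriv le_rfl
  have hgc : Continuous g := hg.continuous
  have hder : ∀ x, HasDerivAt g (deriv g x) x :=
    fun x => ((hg.differentiable one_ne_zero) x).hasDerivAt
  have hsplit : (∫ t in (0:ℝ)..1, (min s t - s * t) * deriv g t)
      = (∫ t in (0:ℝ)..1, min s t * deriv g t) - s * ∫ t in (0:ℝ)..1, t * deriv g t := by
    rw [← intervalIntegral.integral_const_mul, ← intervalIntegral.integral_sub]
    · apply intervalIntegral.integral_congr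
      intro t _
      ring
    · exact (((continuous_const.min continuous_id).mul hD)).intervalIntegrable 0 1
    · exact ((continuous_const.mul (continuous_id.mul hD))).intervalIntegrable 0 1
  have hparts : ∀ b : ℝ, ∫ t in (0:ℝ)..b, t * deriv g t = b * g b - ∫ t in (0:ℝ)..b, g t := by
    intro b
    have := intervalIntegral.integral_mul_deriv_eq_deriv_mul
      (u := fun t : ℝ => t) (u' := fun _ : ℝ => (1:ℝ)) (v := g) (v' := deriv g)
      (a := 0) (b := b)
      (fun x _ => hasDerivAt_id x) (fun x _ => hder x)
      (intervalIntegrable_const) (hD.intervalIntegrable 0 b)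
    simpa using this
  have h1 : (∫ t in (0:ℝ)..s, min s t * deriv g t) = s * g s - ∫ t in (0:ℝ)..s, g t := by
    rw [show (∫ t in (0:ℝ)..s, min s t * deriv g t) = ∫ t in (0:ℝ)..s, t * deriv g t from
      intervalIntegral.integral_congr (fun t ht => by
        rw [Set.uIcc_of_le hs0] at ht
        rw [min_eq_right ht.2])]
    exact hparts s
  have h2 : (∫ t in s..(1:ℝ), min s t * deriv g t) = s * (g 1 - g s) := by
    rw [show (∫ t in s..(1:ℝ), min s t * deriv g t) = ∫ t in s..(1:ℝ), s * deriv g t from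
      intervalIntegral.integral_congr (fun t ht => by
        rw [Set.uIcc_of_le hs1] at ht
        rw [min_eq_left ht.1])]
    rw [intervalIntegral.integral_const_mul]
    rw [intervalIntegral.integral_deriv_eq_sub (fun x _ => (hg.differentiable one_ne_zero) x)
      (hD.intervalIntegrable s 1)]
  have hadd : (∫ t in (0:ℝ)..1, min s t * deriv g t)
      = (∫ t in (0:ℝ)..s, min s t * deriv g t) + ∫ t in s..(1:ℝ), min s t * deriv g t :=
    (intervalIntegral.integral_add_adjacent_intervals
      (((continuous_const.min continuous_id).mul hD).intervalIntegrable 0 s)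
      (((continuous_const.min continuous_id).mul hD).intervalIntegrable s 1)).symm
  rw [hsplit, hadd, h1, h2, hparts 1]
  ring


private lemma wp_lemC {s : ℝ} (hs0 : 0 ≤ s) (hs1 : s ≤ 1) :
    (∫ t in (0:ℝ)..1, (min s t - s * t)) = s * (1 - s) / 2 := by
  have hsplit : (∫ t in (0:ℝ)..1, (min s t - s * t))
      = (∫ t in (0:ℝ)..1, min s t) - s * ∫ t in (0:ℝ)..1, t := by
    rw [← intervalIntegral.integral_const_mul, ← intervalIntegral.integral_sub]
    · exact ((continuous_const.min continuous_id)).intervalIntegrable 0 1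
    · exact (continuous_const.mul continuous_id).intervalIntegrable 0 1
  have h1 : (∫ t in (0:ℝ)..s, min s t) = s ^ 2 / 2 := by
    rw [show (∫ t in (0:ℝ)..s, min s t) = ∫ t in (0:ℝ)..s, t from
      intervalIntegral.integral_congr (fun t ht => by
        rw [Set.uIcc_of_le hs0] at ht
        exact min_eq_right ht.2)]
    simp [integral_id]
  have h2 : (∫ t in s..(1:ℝ), min s t) = s * (1 - s) := by
    rw [show (∫ t in s..(1:ℝ), min s t) = ∫ t in s..(1:ℝ), s from
      intervalIntegral.integral_congr (fun t ht => by
        rw [Set.uIcc_of_le hs1] at ht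
        exact min_eq_left ht.1)]
    simp
    ring_nf
  have hadd : (∫ t in (0:ℝ)..1, min s t)
      = (∫ t in (0:ℝ)..s, min s t) + ∫ t in s..(1:ℝ), min s t :=
    (intervalIntegral.integral_add_adjacent_intervals
      ((continuous_const.min continuous_id).intervalIntegrable 0 s)
      ((continuous_const.min continuous_id).intervalIntegrable s 1)).symm
  rw [hsplit, hadd, h1, h2, integral_id]
  ring

private lemma wp_lemB (g : ℝ → ℝ) (hg : ContDiff ℝ 1 g) :
    (∫ s in (0:ℝ)..1, deriv g s * (s * (∫ w in (0:ℝ)..1, g w) - ∫ t in (0:ℝ)..s, g t))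
      = ∫ z in (0:ℝ)..1, (g z - ∫ w in (0:ℝ)..1, g w) ^ 2 := by
  have hD : Continuous (deriv g) := hg.continuous_deriv le_rfl
  have hgc : Continuous g := hg.continuous
  have hder : ∀ x, HasDerivAt g (deriv g x) x :=
    fun x => ((hg.differentiable one_ne_zero) x).hasDerivAt
  set I : ℝ := ∫ w in (0:ℝ)..1, g w with hI
  set P : ℝ → ℝ := fun s => s * I - ∫ t in (0:ℝ)..s, g t with hP
  have hPd : ∀ x, HasDerivAt P (I - g x) x := by
    intro x
    have h1 : HasDerivAt (fun s : ℝ => s * I) I x := by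
      simpa using (hasDerivAt_id x).mul_const I
    have h2 : HasDerivAt (fun u : ℝ => ∫ t in (0:ℝ)..u, g t) (g x) x :=
      intervalIntegral.integral_hasDerivAt_right (hgc.intervalIntegrable 0 x)
        (hgc.stronglyMeasurable.stronglyMeasurableAtFilter) hgc.continuousAt
    exact h1.sub h2
  have hPc : Continuous P := by
    have : Differentiable ℝ P := fun x => (hPd x).differentiableAt
    exact this.continuous
  have hparts : (∫ s in (0:ℝ)..1, deriv g s * P s + g s * (I - g s))
      = g 1 * P 1 - g 0 * P 0 :=
    intervalIntegral.integral_deriv_mul_eq_sub (u := g) (v := P)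
      (fun x _ => hder x) (fun x _ => hPd x)
      (hD.intervalIntegrable 0 1)
      ((continuous_const.sub hgc).intervalIntegrable 0 1)
  have hP1 : P 1 = 0 := by simp [hP, hI]
  have hP0 : P 0 = 0 := by simp [hP]
  rw [intervalIntegral.integral_add (f := fun s => deriv g s * P s) (g := fun s => g s * (I - g s)) ((hD.mul hPc).intervalIntegrable 0 1)
    ((hgc.mul (continuous_const.sub hgc)).intervalIntegrable 0 1), hP1, hP0] at hparts
  have hsq : (∫ z in (0:ℝ)..1, (g z - I) ^ 2)
      = (∫ z in (0:ℝ)..1, g z * (g z - I)) + ∫ z in (0:ℝ)..1, (I ^ 2 - I * g z) := by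
    rw [← intervalIntegral.integral_add (f := fun z => g z * (g z - I)) (g := fun z => I ^ 2 - I * g z) ((hgc.mul (hgc.sub continuous_const)).intervalIntegrable 0 1)
      ((continuous_const.sub (continuous_const.mul hgc)).intervalIntegrable 0 1)]
    apply intervalIntegral.integral_congr
    intro z _
    ring
  have h3 : (∫ z in (0:ℝ)..1, (I ^ 2 - I * g z)) = 0 := by
    rw [intervalIntegral.integral_sub (f := fun _ => I ^ 2) (g := fun z => I * g z) (intervalIntegrable_const)
      ((continuous_const.mul hgc).intervalIntegrable 0 1),
      intervalIntegral.integral_const_mul]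
    simp [← hI]
    ring
  have h4 : (∫ z in (0:ℝ)..1, g z * (g z - I)) = - ∫ s in (0:ℝ)..1, g s * (I - g s) := by
    rw [← intervalIntegral.integral_neg]
    apply intervalIntegral.integral_congr
    intro z _
    ring
  rw [hsq, h3, h4, add_zero]
  linarith [hparts]

/-- Poincaré-type inequality with weight `z(1-z)` on `[0,1]`:
`∫₀¹ |g - ∫₀¹ g|² ≤ (1/2) ∫₀¹ z(1-z)|g'|²`. -/
theorem weighted_poincare (g : ℝ → ℝ) (hg : ContDiff ℝ 1 g) :
    (∫ z in (0:ℝ)..1, (g z - ∫ w in (0:ℝ)..1, g w) ^ 2)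
      ≤ (1 / 2) * ∫ z in (0:ℝ)..1, z * (1 - z) * (deriv g z) ^ 2 := by
  have hD : Continuous (deriv g) := hg.continuous_deriv le_rfl
  set D := deriv g with hDdef
  set μ : Measure ℝ := volume.restrict (Set.Ioc (0:ℝ) 1) with hμ
  have hIntProd : ∀ f : ℝ × ℝ → ℝ, Continuous f → Integrable f (μ.prod μ) := by
    intro f hf
    rw [hμ, Measure.prod_restrict, ← Measure.volume_eq_prod]
    exact ((hf.continuousOn).integrableOn_compact (isCompact_Icc.prod isCompact_Icc)).mono_set
      (Set.prod_mono Set.Ioc_subset_Icc_self Set.Ioc_subset_Icc_self)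
  have hKc : Continuous fun p : ℝ × ℝ => min p.1 p.2 - p.1 * p.2 :=
    (continuous_fst.min continuous_snd).sub (continuous_fst.mul continuous_snd)
  have hc1 : Continuous fun p : ℝ × ℝ => (min p.1 p.2 - p.1 * p.2) * D p.2 * D p.1 :=
    (hKc.mul (hD.comp continuous_snd)).mul (hD.comp continuous_fst)
  have hc2 : Continuous fun p : ℝ × ℝ => (min p.1 p.2 - p.1 * p.2) * ((D p.1) ^ 2 + (D p.2) ^ 2) / 2 :=
    (hKc.mul (((hD.comp continuous_fst).pow 2).add ((hD.comp continuous_snd).pow 2))).div_const 2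
  have hc3 : Continuous fun p : ℝ × ℝ => (min p.1 p.2 - p.1 * p.2) * (D p.1) ^ 2 :=
    hKc.mul ((hD.comp continuous_fst).pow 2)
  have hc4 : Continuous fun p : ℝ × ℝ => (min p.1 p.2 - p.1 * p.2) * (D p.2) ^ 2 :=
    hKc.mul ((hD.comp continuous_snd).pow 2)
  -- value of the common integral
  have hX : (∫ p, (min p.1 p.2 - p.1 * p.2) * (D p.1) ^ 2 ∂(μ.prod μ))
      = ∫ s, s * (1 - s) / 2 * (D s) ^ 2 ∂μ := by
    rw [integral_prod _ (hIntProd _ hc3)]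
    refine integral_congr_ae ?_
    rw [hμ]
    refine ae_restrict_of_forall_mem measurableSet_Ioc ?_
    intro s hs
    dsimp only
    rw [MeasureTheory.integral_mul_const]
    rw [show (∫ t, (min s t - s * t) ∂μ) = ∫ t in (0:ℝ)..1, (min s t - s * t) from
      (intervalIntegral.integral_of_le zero_le_one).symm]
    rw [wp_lemC hs.1.le hs.2]
  have hY : (∫ p, (min p.1 p.2 - p.1 * p.2) * (D p.2) ^ 2 ∂(μ.prod μ))
      = ∫ s, s * (1 - s) / 2 * (D s) ^ 2 ∂μ := by
    rw [integral_prod_symm _ (hIntProd _ hc4)]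
    refine integral_congr_ae ?_
    rw [hμ]
    refine ae_restrict_of_forall_mem measurableSet_Ioc ?_
    intro t ht
    dsimp only
    rw [MeasureTheory.integral_mul_const]
    have : (∫ s, (min s t - s * t) ∂μ) = ∫ s, (min t s - t * s) ∂μ := by
      refine integral_congr_ae (Filter.Eventually.of_forall fun s => ?_)
      dsimp only
      rw [min_comm, mul_comm]
    rw [this, show (∫ s, (min t s - t * s) ∂μ) = ∫ s in (0:ℝ)..1, (min t s - t * s) from
      (intervalIntegral.integral_of_le zero_le_one).symm]
    rw [wp_lemC ht.1.le ht.2]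
  calc (∫ z in (0:ℝ)..1, (g z - ∫ w in (0:ℝ)..1, g w) ^ 2)
      = ∫ s in (0:ℝ)..1, (∫ t in (0:ℝ)..1, (min s t - s * t) * D t) * D s := by
        rw [← wp_lemB g hg]
        refine intervalIntegral.integral_congr fun s hs => ?_
        rw [Set.uIcc_of_le zero_le_one] at hs
        rw [wp_lemA g hg hs.1 hs.2, mul_comm]
    _ = ∫ s, ∫ t, (min s t - s * t) * D t * D s ∂μ ∂μ := by
        rw [intervalIntegral.integral_of_le zero_le_one]
        refine integral_congr_ae (Filter.Eventually.of_forall fun s => ?_)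
        dsimp only
        rw [intervalIntegral.integral_of_le zero_le_one, ← MeasureTheory.integral_mul_const]
    _ = ∫ p, (min p.1 p.2 - p.1 * p.2) * D p.2 * D p.1 ∂(μ.prod μ) :=
        integral_integral (hIntProd _ hc1)
    _ ≤ ∫ p, (min p.1 p.2 - p.1 * p.2) * ((D p.1) ^ 2 + (D p.2) ^ 2) / 2 ∂(μ.prod μ) := by
        refine integral_mono_ae (hIntProd _ hc1) (hIntProd _ hc2) ?_
        rw [hμ, Measure.prod_restrict]
        refine ae_restrict_of_forall_mem (measurableSet_Ioc.prod measurableSet_Ioc) ?_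
        rintro ⟨s, t⟩ ⟨hs, ht⟩
        have hK : 0 ≤ min s t - s * t := by
          rcases le_total s t with h | h
          · rw [min_eq_left h]; nlinarith [hs.1, hs.2, ht.1, ht.2]
          · rw [min_eq_right h]; nlinarith [hs.1, hs.2, ht.1, ht.2]
        have := mul_nonneg hK (sq_nonneg (D s - D t))
        simp only
        nlinarith [this]
    _ = (1 / 2) * ((∫ p, (min p.1 p.2 - p.1 * p.2) * (D p.1) ^ 2 ∂(μ.prod μ))
          + ∫ p, (min p.1 p.2 - p.1 * p.2) * (D p.2) ^ 2 ∂(μ.prod μ)) := by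
        rw [← integral_add (hIntProd _ hc3) (hIntProd _ hc4), ← MeasureTheory.integral_const_mul]
        refine integral_congr_ae (Filter.Eventually.of_forall fun p => ?_)
        ring
    _ = ∫ s, s * (1 - s) / 2 * (D s) ^ 2 ∂μ := by
        rw [hX, hY]; ring
    _ = (1 / 2) * ∫ z in (0:ℝ)..1, z * (1 - z) * (D z) ^ 2 := by
        rw [intervalIntegral.integral_of_le zero_le_one, ← MeasureTheory.integral_const_mul]
        refine integral_congr_ae (Filter.Eventually.of_forall fun s => ?_)
        ring
end

section
/- Let γ > 1, p(v) = v^{-γ}. Fix M > 0. For every ε > 0 there exists δ > 0 such that for all v, V > 0 with |p(v) - p(V)| < δ and |p(V) - p(M)| < δ, the relative pressure satisfies p(v | V) ≤ ((γ+1)/(2γ) · 1/p(V) + ε) |p(v) - p(V)|², where p(v|V) = p(v) - p(V) - p'(V)(v - V). -/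
open Real Set

lemma core_aux (γ : ℝ) (hγ : 1 < γ) (ε' : ℝ) (hε' : 0 < ε') :
    ∃ t₀ : ℝ, 0 < t₀ ∧ t₀ < 1 ∧ ∀ t : ℝ, t₀ ≤ t →
      t - 1 + γ * (t ^ (-(1/γ)) - 1) ≤ ((γ + 1) / (2 * γ) + ε') * (t - 1) ^ 2 := by
  have hγ0 : (0:ℝ) < γ := lt_trans one_pos hγ
  set b : ℝ := 1 + 1/γ with hb_def
  have hb : (0:ℝ) < b := by positivity
  set C : ℝ := (γ + 1) / (2 * γ) + ε' with hC_def
  have hCb : 2 * C = b + 2 * ε' := by rw [hC_def, hb_def]; field_simp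
  have hC : 0 < C := by
    have : (0:ℝ) < (γ+1)/(2*γ) := by positivity
    linarith [this]
  have h2C : b < 2 * C := by linarith
  set t₀ : ℝ := (b / (2 * C)) ^ ((b + 1)⁻¹) with ht0_def
  have hbase : 0 < b / (2 * C) := by positivity
  have hbase1 : b / (2 * C) < 1 := by
    rw [div_lt_one (by linarith)]; exact h2C
  have ht₀pos : 0 < t₀ := rpow_pos_of_pos hbase _
  have ht₀1 : t₀ < 1 := by
    apply rpow_lt_one hbase.le hbase1
    positivity
  -- key : t₀ ^ (-(b+1)) = 2*C/b
  have ht₀pow : t₀ ^ (-(b + 1)) = 2 * C / b := by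
    rw [ht0_def, ← rpow_mul hbase.le]
    have : (b + 1)⁻¹ * -(b + 1) = -1 := by field_simp
    rw [this, rpow_neg_one, inv_div]
  -- functions
  set g : ℝ → ℝ := fun t => t - 1 + γ * (t ^ (-(1/γ)) - 1) with hg_def
  set h : ℝ → ℝ := fun t => C * (t - 1) ^ 2 - g t with hh_def
  set h' : ℝ → ℝ := fun t => 2 * C * (t - 1) - 1 + t ^ (-(1/γ) - 1) with hh'_def
  set h'' : ℝ → ℝ := fun t => 2 * C + (-(1/γ) - 1) * t ^ (-(1/γ) - 2) with hh''_def
  have hgne : γ ≠ 0 := ne_of_gt hγ0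
  have hd1 : ∀ x : ℝ, 0 < x → HasDerivAt h (h' x) x := by
    intro x hx
    have hr : HasDerivAt (fun t : ℝ => t ^ (-(1/γ))) (-(1/γ) * x ^ (-(1/γ) - 1)) x :=
      Real.hasDerivAt_rpow_const (Or.inl (ne_of_gt hx))
    have h1 : HasDerivAt (fun t : ℝ => t - 1 + γ * (t ^ (-(1/γ)) - 1))
        (1 + γ * (-(1/γ) * x ^ (-(1/γ) - 1))) x := by
      have := ((hasDerivAt_id x).sub_const 1).add (((hr.sub_const 1)).const_mul γ)
      exact this
    have h2 : HasDerivAt (fun t : ℝ => C * (t - 1) ^ 2) (C * (2 * (x - 1))) x := by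
      have := (((hasDerivAt_id x).sub_const 1).pow 2).const_mul C
      simpa using this
    have := h2.sub h1
    refine HasDerivAt.congr_deriv this ?_
    rw [hh'_def]
    field_simp
    ring
  have hd2 : ∀ x : ℝ, 0 < x → HasDerivAt h' (h'' x) x := by
    intro x hx
    have hr : HasDerivAt (fun t : ℝ => t ^ (-(1/γ) - 1)) ((-(1/γ) - 1) * x ^ (-(1/γ) - 1 - 1)) x :=
      Real.hasDerivAt_rpow_const (Or.inl (ne_of_gt hx))
    have h1 : HasDerivAt (fun t : ℝ => 2 * C * (t - 1) - 1 + t ^ (-(1/γ) - 1))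
        (2 * C + (-(1/γ) - 1) * x ^ (-(1/γ) - 1 - 1)) x := by
      have := ((((hasDerivAt_id x).sub_const 1).const_mul (2*C)).sub_const 1).add hr
      exact this.congr_deriv (by ring)
    convert h1 using 1
    rw [hh''_def]
    ring_nf
  have hpp : ∀ x : ℝ, t₀ ≤ x → 0 ≤ h'' x := by
    intro x hx
    have hx0 : 0 < x := lt_of_lt_of_le ht₀pos hx
    have hig : (0:ℝ) < 1/γ := by positivity
    have hxe : x ^ (-(1/γ) - 2) ≤ t₀ ^ (-(1/γ) - 2) :=
      rpow_le_rpow_of_nonpos ht₀pos hx (by linarith)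
    have heq : -(1/γ) - 2 = -(b + 1) := by rw [hb_def]; ring
    have ht' : t₀ ^ (-(1/γ) - 2) = 2 * C / b := by rw [heq, ht₀pow]
    have key2 : b * x ^ (-(1/γ) - 2) ≤ 2 * C := by
      calc b * x ^ (-(1/γ) - 2) ≤ b * (2 * C / b) := by
            apply mul_le_mul_of_nonneg_left _ hb.le
            rw [← ht']; exact hxe
        _ = 2 * C := by field_simp
    have hbeq : -(1/γ) - 1 = -b := by rw [hb_def]; ring
    rw [hh''_def]
    simp only
    rw [hbeq]
    linarith [key2]
  -- h' monotone on Ici t₀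
  have hmono' : MonotoneOn h' (Ici t₀) := by
    apply monotoneOn_of_deriv_nonneg (convex_Ici t₀)
    · intro x hx
      exact (hd2 x (lt_of_lt_of_le ht₀pos hx)).differentiableAt.continuousAt.continuousWithinAt
    · intro x hx
      rw [interior_Ici] at hx
      exact ((hd2 x (lt_trans ht₀pos hx)).differentiableAt).differentiableWithinAt
    · intro x hx
      rw [interior_Ici] at hx
      rw [(hd2 x (lt_trans ht₀pos hx)).deriv]
      exact hpp x (le_of_lt hx)
  have hh'1 : h' 1 = 0 := by
    rw [hh'_def]; simp [Real.one_rpow]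
  have hh1 : h 1 = 0 := by
    rw [hh_def, hg_def]; simp [Real.one_rpow]
  -- h monotone on Ici 1, antitone on Icc t₀ 1
  have hmonoh : MonotoneOn h (Ici 1) := by
    apply monotoneOn_of_deriv_nonneg (convex_Ici 1)
    · intro x hx
      exact (hd1 x (lt_of_lt_of_le one_pos hx)).differentiableAt.continuousAt.continuousWithinAt
    · intro x hx
      rw [interior_Ici] at hx
      exact ((hd1 x (lt_trans one_pos hx)).differentiableAt).differentiableWithinAt
    · intro x hx
      rw [interior_Ici] at hx
      rw [(hd1 x (lt_trans one_pos hx)).deriv]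
      rw [← hh'1]
      exact hmono' (le_of_lt (lt_of_lt_of_le ht₀1 le_rfl)) (le_of_lt (lt_trans ht₀1 hx)) (le_of_lt hx)
  have hantih : AntitoneOn h (Icc t₀ 1) := by
    apply antitoneOn_of_deriv_nonpos (convex_Icc t₀ 1)
    · intro x hx
      exact (hd1 x (lt_of_lt_of_le ht₀pos hx.1)).differentiableAt.continuousAt.continuousWithinAt
    · intro x hx
      rw [interior_Icc] at hx
      exact ((hd1 x (lt_trans ht₀pos hx.1)).differentiableAt).differentiableWithinAt
    · intro x hx
      rw [interior_Icc] at hx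
      rw [(hd1 x (lt_trans ht₀pos hx.1)).deriv]
      rw [← hh'1]
      exact hmono' (le_of_lt hx.1) (le_of_lt ht₀1) (le_of_lt hx.2)
  -- conclude
  refine ⟨t₀, ht₀pos, ht₀1, fun t ht => ?_⟩
  have key : 0 ≤ h t := by
    rcases le_total 1 t with h1t | ht1
    · rw [← hh1]; exact hmonoh (self_mem_Ici) h1t h1t
    · rw [← hh1]
      exact hantih ⟨ht, ht1⟩ ⟨le_of_lt ht₀1, le_rfl⟩ ht1
  rw [hh_def, hg_def] at key
  simp only at key
  linarith [key]

/-- upper bound on the relative pressure: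
for every `ε > 0` there is `δ > 0` such that whenever `|p(v)-p(V)| < δ` and
`|p(V)-p(M)| < δ`, `p(v|V) ≤ ((γ+1)/(2γ) · 1/p(V) + ε) |p(v)-p(V)|²`. -/
theorem relative_p_upper (γ M : ℝ) (hγ : 1 < γ) (hM : 0 < M) :
    ∀ ε > 0, ∃ δ > 0, ∀ v V : ℝ, 0 < v → 0 < V →
      |v ^ (-γ) - V ^ (-γ)| < δ → |V ^ (-γ) - M ^ (-γ)| < δ →
      ((fun v : ℝ => v ^ (-γ)) v - (fun v : ℝ => v ^ (-γ)) V
        - deriv (fun v : ℝ => v ^ (-γ)) V * (v - V))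
        ≤ ((γ + 1) / (2 * γ) * (1 / V ^ (-γ)) + ε) * |v ^ (-γ) - V ^ (-γ)| ^ 2 := by
  intro ε hε
  have hγ0 : (0:ℝ) < γ := lt_trans one_pos hγ
  have hP0pos : 0 < M ^ (-γ) := Real.rpow_pos_of_pos hM _
  set P₀ : ℝ := M ^ (-γ) with hP0_def
  obtain ⟨t₀, ht₀pos, ht₀1, hcore⟩ := core_aux γ hγ (ε * P₀ / 2) (by positivity)
  have h1t₀ : (0:ℝ) < 1 - t₀ := by linarith
  refine ⟨min (P₀ / 2) ((1 - t₀) * P₀ / 2), by positivity, ?_⟩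
  intro v V hv hV hqP hPP0
  have hq : 0 < v ^ (-γ) := Real.rpow_pos_of_pos hv _
  have hP : 0 < V ^ (-γ) := Real.rpow_pos_of_pos hV _
  set q : ℝ := v ^ (-γ) with hq_def
  set P : ℝ := V ^ (-γ) with hP_def
  have hqP1 : |q - P| < (1 - t₀) * P₀ / 2 := lt_of_lt_of_le hqP (min_le_right _ _)
  have hPP0' : |P - P₀| < P₀ / 2 := lt_of_lt_of_le hPP0 (min_le_left _ _)
  have hPlb : P₀ / 2 < P := by
    have := abs_lt.mp hPP0'; linarith [this.1]
  have hderiv : deriv (fun v : ℝ => v ^ (-γ)) V = -γ * V ^ (-γ - 1) :=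
    (Real.hasDerivAt_rpow_const (Or.inl hV.ne')).deriv
  simp only
  rw [hderiv, sq_abs]
  have htlb : t₀ ≤ q / P := by
    rw [le_div_iff₀ hP]
    have h1 := (abs_lt.mp hqP1).1
    nlinarith [hPlb, h1t₀]
  have hcq := hcore (q / P) htlb
  have hvV : (q / P) ^ (-(1/γ)) = v / V := by
    rw [hq_def, hP_def, ← Real.div_rpow hv.le hV.le,
      ← Real.rpow_mul (by positivity : (0:ℝ) ≤ v / V),
      show (-γ) * (-(1/γ)) = 1 by field_simp]
    exact Real.rpow_one _
  rw [hvV] at hcq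
  have hVv : P * (v / V) = V ^ (-γ - 1) * v := by
    rw [hP_def, show (-γ : ℝ) = (-γ - 1) + 1 by ring, Real.rpow_add_one hV.ne']
    field_simp
    ring
  have hPe : V ^ (-γ - 1) * V = P := by
    rw [hP_def, ← Real.rpow_add_one hV.ne' (-γ - 1)]
    ring_nf
  have hLHS : q - P - (-γ * V ^ (-γ - 1)) * (v - V)
      = P * (q / P - 1 + γ * (v / V - 1)) := by
    have e1 : P * (q / P - 1 + γ * (v / V - 1))
        = (q - P) + γ * (P * (v / V) - P) := by
      field_simp
    rw [e1, hVv, ← hPe]; ring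
  rw [hLHS]
  have hmul : P * (q / P - 1 + γ * (v / V - 1))
      ≤ P * (((γ + 1) / (2 * γ) + ε * P₀ / 2) * (q / P - 1) ^ 2) :=
    mul_le_mul_of_nonneg_left hcq hP.le
  have hsq : P * (((γ + 1) / (2 * γ) + ε * P₀ / 2) * (q / P - 1) ^ 2)
      = ((γ + 1) / (2 * γ) + ε * P₀ / 2) / P * (q - P) ^ 2 := by
    field_simp
  have hcoef : ((γ + 1) / (2 * γ) + ε * P₀ / 2) / P
      ≤ (γ + 1) / (2 * γ) * (1 / P) + ε := by
    rw [add_div]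
    have h1 : (γ + 1) / (2 * γ) / P = (γ + 1) / (2 * γ) * (1 / P) := by ring
    have h2 : ε * P₀ / 2 / P ≤ ε := by
      rw [div_le_iff₀ hP]; nlinarith [hPlb, hε]
    linarith [h1.ge, h1.le, h2]
  calc P * (q / P - 1 + γ * (v / V - 1))
      ≤ ((γ + 1) / (2 * γ) + ε * P₀ / 2) / P * (q - P) ^ 2 := by rw [← hsq]; exact hmul
    _ ≤ ((γ + 1) / (2 * γ) * (1 / P) + ε) * (q - P) ^ 2 :=
        mul_le_mul_of_nonneg_right hcoef (sq_nonneg _)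
end
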